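/- arXiv:2407.16172 — 3 statements merged into one kernel-verified Lean document; each statement's English description precedes it below -/
import Mathlib

section
/- Let c > 0, let g : ℝ → ℝ be Lebesgue integrable and even (g(−ω) = g(ω) for all ω), and let n ∈ ℤ. Then the complex number c_n := ∫_{−c}^{c} exp(i·n·arcsin(ω/c)) g(ω) dω + (1/(2π)) ∫_{|ω|>c} ∫_0^{2π} e^{i n θ} · (√(ω² − c²)/|ω − c·sin θ|) · g(ω) dθ dω has imaginary part zero, i.e., c_n is a real number. -/
open Real MeasureTheory intervalIntegral

private lemma conj_intervalIntegral (f : ℝ → ℂ) (a b : ℝ) :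
    (starRingEnd ℂ) (∫ x in a..b, f x) = ∫ x in a..b, (starRingEnd ℂ) (f x) := by
  rw [intervalIntegral, intervalIntegral, integral_conj, integral_conj, ← map_sub]

private lemma conj_exp_I_mul (n : ℤ) (x : ℝ) :
    (starRingEnd ℂ) (Complex.exp (Complex.I * (n : ℂ) * (x : ℂ))) =
      Complex.exp (Complex.I * (n : ℂ) * ((-x : ℝ) : ℂ)) := by
  rw [← Complex.exp_conj]
  congr 1
  simp only [map_mul, Complex.conj_I, Complex.conj_ofReal, map_intCast]
  push_cast
  ring

/-- The `n`-th order parameter of the Kuramoto steady state is real: for `c > 0`,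
`g` integrable and even, and `n ∈ ℤ`, the complex number
`∫_{−c}^{c} e^{i n arcsin(ω/c)} g(ω) dω
  + (1/(2π)) ∫_{|ω|>c} ∫_0^{2π} e^{inθ} √(ω²−c²)/|ω − c sin θ| g(ω) dθ dω`
has imaginary part zero. -/
theorem order_parameter_real (c : ℝ) (hc : 0 < c) (g : ℝ → ℝ)
    (hg_int : Integrable g) (hg_even : ∀ ω : ℝ, g (-ω) = g ω) (n : ℤ) :
    ((∫ ω in (-c)..c,
        Complex.exp (Complex.I * (n : ℂ) * (Real.arcsin (ω / c) : ℂ)) * (g ω : ℂ))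
      + (1 / (2 * (π : ℂ))) *
        ∫ ω in {ω : ℝ | c < |ω|},
          ∫ θ in (0:ℝ)..(2 * π),
            Complex.exp (Complex.I * (n : ℂ) * (θ : ℂ)) *
              ((Real.sqrt (ω ^ 2 - c ^ 2) / |ω - c * Real.sin θ| : ℝ) : ℂ) *
                (g ω : ℂ)).im = 0 := by
  set S : Set ℝ := {ω : ℝ | c < |ω|} with hS
  set f₁ : ℝ → ℂ := fun ω =>
    Complex.exp (Complex.I * (n : ℂ) * (Real.arcsin (ω / c) : ℂ)) * (g ω : ℂ) with hf₁
  set F : ℝ → ℂ := fun ω =>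
    ∫ θ in (0:ℝ)..(2 * π),
      Complex.exp (Complex.I * (n : ℂ) * (θ : ℂ)) *
        ((Real.sqrt (ω ^ 2 - c ^ 2) / |ω - c * Real.sin θ| : ℝ) : ℂ) * (g ω : ℂ) with hF
  -- first integral is self-conjugate
  have h1 : (starRingEnd ℂ) (∫ ω in (-c)..c, f₁ ω) = ∫ ω in (-c)..c, f₁ ω := by
    rw [conj_intervalIntegral]
    have : ∀ ω : ℝ, (starRingEnd ℂ) (f₁ ω) = f₁ (-ω) := by
      intro ω
      simp only [hf₁, map_mul, conj_exp_I_mul, Complex.conj_ofReal, hg_even,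
        neg_div, Real.arcsin_neg]
    simp_rw [this]
    rw [intervalIntegral.integral_comp_neg f₁, neg_neg]
  -- pointwise: conj (F ω) = F (-ω)
  have hFconj : ∀ ω : ℝ, (starRingEnd ℂ) (F ω) = F (-ω) := by
    intro ω
    rw [hF, conj_intervalIntegral]
    -- define the integrand of F (-ω)
    set H : ℝ → ℂ := fun θ =>
      Complex.exp (Complex.I * (n : ℂ) * (θ : ℂ)) *
        ((Real.sqrt ((-ω) ^ 2 - c ^ 2) / |(-ω) - c * Real.sin θ| : ℝ) : ℂ) *
          ((g (-ω) : ℝ) : ℂ) with hH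
    have step1 : ∀ θ : ℝ,
        (starRingEnd ℂ) (Complex.exp (Complex.I * (n : ℂ) * (θ : ℂ)) *
          ((Real.sqrt (ω ^ 2 - c ^ 2) / |ω - c * Real.sin θ| : ℝ) : ℂ) * (g ω : ℂ))
          = H (-θ) := by
      intro θ
      have habs : |(-ω) - c * Real.sin (-θ)| = |ω - c * Real.sin θ| := by
        rw [Real.sin_neg, show -ω - c * -Real.sin θ = -(ω - c * Real.sin θ) by ring, abs_neg]
      simp only [hH, map_mul, conj_exp_I_mul, Complex.conj_ofReal, hg_even, neg_sq, habs]
    simp_rw [step1]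
    have step2 : (∫ θ in (0:ℝ)..(2 * π), H (-θ)) = ∫ θ in (-(2*π))..(0:ℝ), H θ := by
      simpa using intervalIntegral.integral_comp_neg H (a := 0) (b := 2 * π)
    have step3 : (∫ θ in (-(2*π))..(0:ℝ), H θ) = ∫ θ in (0:ℝ)..(2 * π), H θ := by
      have := intervalIntegral.integral_comp_sub_right (a := (0:ℝ)) (b := 2 * π) H (2 * π)
      rw [show (0:ℝ) - 2 * π = -(2 * π) by ring, show 2 * π - 2 * π = (0:ℝ) by ring] at this
      rw [← this]
      congr 1
      ext θ
      simp only [hH]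
      congr 2
      · rw [show ((θ - 2 * π : ℝ) : ℂ) = (θ:ℂ) - 2 * (π:ℂ) by push_cast; ring]
        rw [show Complex.I * (n:ℂ) * ((θ:ℂ) - 2 * (π:ℂ)) =
          Complex.I * (n:ℂ) * (θ:ℂ) + ((-n : ℤ) : ℂ) * (2 * (π:ℂ) * Complex.I) by
            push_cast; ring,
          Complex.exp_add, Complex.exp_int_mul_two_pi_mul_I, mul_one]
      · rw [Real.sin_sub_two_pi]
    rw [step2, step3]
  -- second integral is self-conjugate
  have hSmeas : MeasurableSet S := by
    exact measurableSet_lt measurable_const measurable_id.abs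
  have h2 : (starRingEnd ℂ) (∫ ω in S, F ω) = ∫ ω in S, F ω := by
    rw [← integral_conj]
    simp_rw [hFconj]
    rw [← MeasureTheory.integral_indicator hSmeas, ← MeasureTheory.integral_indicator hSmeas]
    rw [← integral_neg_eq_self (S.indicator F) volume]
    congr 1
    ext x
    by_cases hx : x ∈ S
    · have hx' : -x ∈ S := by simpa [hS, abs_neg] using hx
      simp [Set.indicator_of_mem, hx, hx']
    · have hx' : -x ∉ S := by simpa [hS, abs_neg] using hx
      simp [Set.indicator_of_notMem, hx, hx']
  -- conclude
  have hz₁ : (∫ ω in (-c)..c, f₁ ω).im = 0 := by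
    have := congrArg Complex.im h1
    simp only [Complex.conj_im] at this
    linarith
  have hz₂ : (∫ ω in S, F ω).im = 0 := by
    have := congrArg Complex.im h2
    simp only [Complex.conj_im] at this
    linarith
  have hr : (1 / (2 * (π : ℂ))) = (((1 / (2 * π) : ℝ)) : ℂ) := by push_cast; ring
  rw [hr]
  simp [Complex.add_im, Complex.mul_im, hz₁, hz₂]
end

section
/- Let c > 0, let g : ℝ → ℝ be Lebesgue integrable and even (g(−ω) = g(ω) for all ω), and let n ∈ ℤ be odd. Then (1/(2π)) ∫_{|ω|>c} ∫_0^{2π} e^{i n θ} · (√(ω² − c²)/|ω − c·sin θ|) · g(ω) dθ dω = 0. -/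
open Real MeasureTheory intervalIntegral

/-- For odd `n`, the non-entrained contribution to the `n`-th order parameter
of the Kuramoto steady state vanishes:
`(1/(2π)) ∫_{|ω|>c} ∫_0^{2π} e^{inθ} √(ω²−c²)/|ω − c sin θ| g(ω) dθ dω = 0`. -/
theorem nonentrained_part_vanishes_odd (c : ℝ) (hc : 0 < c) (g : ℝ → ℝ)
    (hg_int : Integrable g) (hg_even : ∀ ω : ℝ, g (-ω) = g ω)
    (n : ℤ) (hn : Odd n) :
    (1 / (2 * (π : ℂ))) *
        ∫ ω in {ω : ℝ | c < |ω|},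
          ∫ θ in (0:ℝ)..(2 * π),
            Complex.exp (Complex.I * (n : ℂ) * (θ : ℂ)) *
              ((Real.sqrt (ω ^ 2 - c ^ 2) / |ω - c * Real.sin θ| : ℝ) : ℂ) *
                (g ω : ℂ) = 0 := by
  set h : ℝ → ℝ → ℂ := fun ω θ =>
    Complex.exp (Complex.I * (n : ℂ) * (θ : ℂ)) *
      ((Real.sqrt (ω ^ 2 - c ^ 2) / |ω - c * Real.sin θ| : ℝ) : ℂ) * (g ω : ℂ) with hh
  set F : ℝ → ℂ := fun ω => ∫ θ in (0:ℝ)..(2 * π), h ω θ with hF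
  -- key pointwise antisymmetry inside the inner integral
  have hexp : ∀ θ : ℝ, Complex.exp (Complex.I * (n : ℂ) * ((θ : ℂ) + (π : ℂ)))
      = - Complex.exp (Complex.I * (n : ℂ) * (θ : ℂ)) := by
    intro θ
    have h1 : Complex.I * (n : ℂ) * ((θ : ℂ) + (π : ℂ))
        = Complex.I * (n : ℂ) * (θ : ℂ) + (n : ℂ) * ((π : ℂ) * Complex.I) := by ring
    rw [h1, Complex.exp_add, Complex.exp_int_mul, Complex.exp_pi_mul_I, hn.neg_one_zpow]
    ring
  have hkey : ∀ ω θ : ℝ, h (-ω) θ = - h ω (θ + π) := by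
    intro ω θ
    have hsin : Real.sin (θ + π) = - Real.sin θ := by
      rw [Real.sin_add, Real.sin_pi, Real.cos_pi]; ring
    have habs : |(-ω) - c * Real.sin θ| = |ω - c * Real.sin (θ + π)| := by
      rw [hsin]
      rw [show (-ω) - c * Real.sin θ = -(ω - c * (- Real.sin θ)) by ring, abs_neg]
    simp only [hh]
    rw [neg_pow, hg_even ω]
    push_cast
    rw [hexp θ, habs]
    ring_nf
  -- periodicity of the inner integrand
  have hper : ∀ ω : ℝ, Function.Periodic (h ω) (2 * π) := by
    intro ω θ
    simp only [hh]
    have hsin : Real.sin (θ + 2 * π) = Real.sin θ := Real.sin_add_two_pi θ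
    have hexp2 : Complex.exp (Complex.I * (n : ℂ) * ((θ : ℂ) + 2 * (π : ℂ)))
        = Complex.exp (Complex.I * (n : ℂ) * (θ : ℂ)) := by
      have h1 : Complex.I * (n : ℂ) * ((θ : ℂ) + 2 * (π : ℂ))
          = Complex.I * (n : ℂ) * (θ : ℂ) + (n : ℂ) * (2 * (π : ℂ) * Complex.I) := by ring
      rw [h1, Complex.exp_add, Complex.exp_int_mul_two_pi_mul_I, mul_one]
    push_cast
    rw [hexp2, hsin]
  -- F is odd
  have hFodd : ∀ ω : ℝ, F (-ω) = - F ω := by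
    intro ω
    have h1 : F (-ω) = ∫ θ in (0:ℝ)..(2 * π), - h ω (θ + π) := by
      simp only [hF]
      exact intervalIntegral.integral_congr fun θ _ => hkey ω θ
    rw [h1, intervalIntegral.integral_neg, neg_inj]
    rw [intervalIntegral.integral_comp_add_right (h ω) π, zero_add]
    have := (hper ω).intervalIntegral_add_eq π 0
    rw [zero_add, show π + 2 * π = 2 * π + π by ring] at this
    exact this
  -- the outer set is symmetric; the integral of the odd indicator vanishes
  have hS : MeasurableSet {ω : ℝ | c < |ω|} :=
    measurableSet_lt measurable_const (measurable_id.abs)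
  have hind : ∀ ω : ℝ, ({ω : ℝ | c < |ω|}.indicator F) (-ω)
      = - ({ω : ℝ | c < |ω|}.indicator F) ω := by
    intro ω
    by_cases hω : ω ∈ {ω : ℝ | c < |ω|}
    · have hω' : -ω ∈ {ω : ℝ | c < |ω|} := by simpa using hω
      rw [Set.indicator_of_mem hω', Set.indicator_of_mem hω, hFodd]
    · have hω' : -ω ∉ {ω : ℝ | c < |ω|} := by simpa using hω
      rw [Set.indicator_of_notMem hω', Set.indicator_of_notMem hω, neg_zero]
  have hzero : (∫ ω, ({ω : ℝ | c < |ω|}.indicator F) ω) = 0 := by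
    have h1 : (∫ ω, ({ω : ℝ | c < |ω|}.indicator F) (-ω))
        = ∫ ω, ({ω : ℝ | c < |ω|}.indicator F) ω :=
      MeasureTheory.integral_neg_eq_self _ _
    rw [show (fun ω => ({ω : ℝ | c < |ω|}.indicator F) (-ω))
        = fun ω => - ({ω : ℝ | c < |ω|}.indicator F) ω from funext hind] at h1
    rw [MeasureTheory.integral_neg] at h1
    linear_combination (-1/2 : ℂ) * h1
  rw [show (∫ ω in {ω : ℝ | c < |ω|}, F ω) = 0 from
    (MeasureTheory.integral_indicator hS).symm.trans hzero, mul_zero]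
end

section
/- Let n ≥ 2 be an even integer and let φ : [−π/2, π/2] → ℝ be monotone and bounded. Then there exists ξ ∈ (−π/2, π/2) such that ∫_{−π/2}^{π/2} cos(n θ) · φ(θ) dθ = (sin(n ξ)/n) · (φ(−π/2) − φ(π/2)). -/
/-!
Bonnet's form of the second mean value theorem. For `ψ = φ - φ a` monotone, Fubini applied to
`ψ θ = ∫ t in (0, ψ b], 1[t < ψ θ]` writes `∫_a^b f ψ` as an integral over `t ∈ (0, ψ b]` of
integrals of `f` over the superlevel sets `{t < ψ}`; these are intervals `(c, b]` up to a point,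
so `∫_a^b f ψ` lies between `ψ b · min_c ∫_c^b f` and `ψ b · max_c ∫_c^b f`, and the intermediate
value theorem produces `ξ`. For `f = cos (n ·)` with `n` even, `∫_{-π/2}^ξ f = sin (n ξ) / n`
and `∫_ξ^{π/2} f = -sin (n ξ) / n`; an endpoint `ξ` may be replaced by `0`, as `sin (n ξ) = 0`
there.
-/

open Real MeasureTheory intervalIntegral Set

section SecondMeanValue

variable {f ψ : ℝ → ℝ} {a b : ℝ}

theorem IsUpperSet.exists_setIntegral_Ioc_inter_eq {S : Set ℝ} (hS : IsUpperSet S)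
    (hab : a ≤ b) : ∃ c ∈ Icc a b, ∫ x in Ioc a b ∩ S, f x = ∫ x in c..b, f x := by
  rcases (Ioc a b ∩ S).eq_empty_or_nonempty with hempty | hne
  · exact ⟨b, right_mem_Icc.2 hab, by simp [hempty]⟩
  have hbdd : BddBelow (Ioc a b ∩ S) := ⟨a, fun x hx => hx.1.1.le⟩
  obtain ⟨x, hx⟩ := hne
  set c := sInf (Ioc a b ∩ S)
  have hb : b ∈ Ioc a b ∩ S := ⟨⟨hx.1.1.trans_le hx.1.2, le_rfl⟩, hS hx.1.2 hx.2⟩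
  have hac : a ≤ c := le_csInf ⟨x, hx⟩ fun y hy => hy.1.1.le
  have hcb : c ≤ b := csInf_le hbdd hb
  have hsub : Ioc a b ∩ S ⊆ Icc c b := fun y hy => ⟨csInf_le hbdd hy, hy.1.2⟩
  have hsup : Ioc c b ⊆ Ioc a b ∩ S := fun y hy => by
    obtain ⟨z, hz, hzy⟩ := exists_lt_of_csInf_lt ⟨x, hx⟩ hy.1
    exact ⟨⟨hac.trans_lt hy.1, hy.2⟩, hS hzy.le hz.2⟩
  refine ⟨c, ⟨hac, hcb⟩, ?_⟩
  rw [integral_of_le hcb]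
  exact setIntegral_congr_set
    ((hsub.eventuallyLE.trans Ioc_ae_eq_Icc.symm.le).antisymm hsup.eventuallyLE)

theorem integrable_indicator_lt_comp_fst_prod (hψ : Measurable ψ)
    (hf : IntegrableOn f (Ioc a b)) (T : ℝ) :
    Integrable ({p : ℝ × ℝ | p.2 < ψ p.1}.indicator fun p => f p.1)
      ((volume.restrict (Ioc a b)).prod (volume.restrict (Ioc 0 T))) :=
  (hf.comp_fst _).indicator (measurableSet_lt measurable_snd (hψ.comp measurable_fst))

theorem integrableOn_setIntegral_Ioc_inter_superlevel (hψ : Measurable ψ)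
    (hf : IntegrableOn f (Ioc a b)) (T : ℝ) :
    IntegrableOn (fun t => ∫ x in Ioc a b ∩ {x | t < ψ x}, f x) (Ioc 0 T) := by
  refine ((integrable_indicator_lt_comp_fst_prod hψ hf T).integral_prod_right).congr
    (ae_of_all _ fun t => ?_)
  exact setIntegral_indicator (f := f) (measurableSet_lt measurable_const hψ)

theorem setIntegral_mul_eq_integral_setIntegral_superlevel (hψ : Monotone ψ) (hψa : 0 ≤ ψ a)
    (hf : IntegrableOn f (Ioc a b)) :
    ∫ x in Ioc a b, f x * ψ x = ∫ t in Ioc 0 (ψ b), ∫ x in Ioc a b ∩ {x | t < ψ x}, f x := by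
  have hswap := integral_integral_swap
    (f := fun x t => {p : ℝ × ℝ | p.2 < ψ p.1}.indicator (fun p => f p.1) (x, t))
    (integrable_indicator_lt_comp_fst_prod hψ.measurable hf (ψ b))
  have hinner : ∀ t, ∫ x in Ioc a b, {p : ℝ × ℝ | p.2 < ψ p.1}.indicator (fun p => f p.1) (x, t)
      = ∫ x in Ioc a b ∩ {x | t < ψ x}, f x := fun t =>
    setIntegral_indicator (f := f) (measurableSet_lt measurable_const hψ.measurable)
  have houter : ∀ x ∈ Ioc a b, ∫ t in Ioc 0 (ψ b),
      {p : ℝ × ℝ | p.2 < ψ p.1}.indicator (fun p => f p.1) (x, t) = f x * ψ x := by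
    intro x hx
    have hψx : 0 ≤ ψ x := hψa.trans (hψ hx.1.le)
    calc _ = ∫ t in Ioc 0 (ψ b) ∩ Iio (ψ x), f x :=
          setIntegral_indicator (f := fun _ => f x) measurableSet_Iio
      _ = ∫ t in Ioo 0 (ψ x), f x := by
          have : Ioc 0 (ψ b) ∩ Iio (ψ x) = Ioo 0 (ψ x) := Set.ext fun t =>
            ⟨fun h => ⟨h.1.1, h.2⟩, fun h => ⟨⟨h.1, h.2.le.trans (hψ hx.2)⟩, h.2⟩⟩
          rw [this]
      _ = f x * ψ x := by
          rw [setIntegral_const, Real.volume_real_Ioo_of_le hψx, smul_eq_mul]; ring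
  simp only [hinner] at hswap
  rw [← hswap, setIntegral_congr_fun measurableSet_Ioc houter]

theorem setIntegral_mul_mem_Icc_of_monotone (hab : a ≤ b) (hψ : Monotone ψ) (hψa : 0 ≤ ψ a)
    (hf : IntegrableOn f (Ioc a b)) {m M : ℝ}
    (hmM : ∀ c ∈ Icc a b, ∫ x in c..b, f x ∈ Icc m M) :
    ∫ x in Ioc a b, f x * ψ x ∈ Icc (m * ψ b) (M * ψ b) := by
  have hψb : 0 ≤ ψ b := hψa.trans (hψ hab)
  have hslice : ∀ t, ∫ x in Ioc a b ∩ {x | t < ψ x}, f x ∈ Icc m M := fun t => by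
    obtain ⟨c, hc, hfc⟩ := IsUpperSet.exists_setIntegral_Ioc_inter_eq (f := f)
      (fun x y hxy (hx : t < ψ x) => hx.trans_le (hψ hxy)) hab
    exact hfc ▸ hmM c hc
  have hconst : ∀ K : ℝ, ∫ _ in Ioc 0 (ψ b), K = K * ψ b := fun K => by
    rw [setIntegral_const, Real.volume_real_Ioc_of_le hψb, smul_eq_mul, sub_zero, mul_comm]
  have hint := integrableOn_setIntegral_Ioc_inter_superlevel hψ.measurable hf (ψ b)
  rw [setIntegral_mul_eq_integral_setIntegral_superlevel hψ hψa hf, ← hconst, ← hconst]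
  exact ⟨setIntegral_mono (integrableOn_const measure_Ioc_lt_top.ne) hint fun t => (hslice t).1,
    setIntegral_mono hint (integrableOn_const measure_Ioc_lt_top.ne) fun t => (hslice t).2⟩

theorem exists_setIntegral_mul_eq_of_monotone (hab : a ≤ b) (hψ : Monotone ψ) (hψa : 0 ≤ ψ a)
    (hf : IntegrableOn f (Icc a b)) :
    ∃ ξ ∈ Icc a b, ∫ x in Ioc a b, f x * ψ x = ψ b * ∫ x in ξ..b, f x := by
  set g : ℝ → ℝ := fun c => ∫ x in c..b, f x
  have hg : ContinuousOn g (Icc a b) := by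
    simpa only [uIcc_of_le hab] using
      continuousOn_primitive_interval_left (a := a) (b := b) (by rwa [uIcc_of_le hab])
  obtain ⟨cm, hcm, hmin⟩ := isCompact_Icc.exists_isMinOn (nonempty_Icc.2 hab) hg
  obtain ⟨cM, hcM, hmax⟩ := isCompact_Icc.exists_isMaxOn (nonempty_Icc.2 hab) hg
  have hbound := setIntegral_mul_mem_Icc_of_monotone hab hψ hψa
    (hf.mono_set Ioc_subset_Icc_self) fun c hc => ⟨hmin hc, hmax hc⟩
  obtain ⟨ξ, hξ, hgξ⟩ : ∃ ξ ∈ uIcc cm cM, g ξ * ψ b = ∫ x in Ioc a b, f x * ψ x :=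
    intermediate_value_uIcc ((hg.mono (uIcc_subset_Icc hcm hcM)).mul continuousOn_const)
      (Icc_subset_uIcc hbound)
  exact ⟨ξ, uIcc_subset_Icc hcm hcM hξ, by rw [← hgξ, mul_comm]⟩

theorem exists_intervalIntegral_mul_eq_of_monotoneOn {φ : ℝ → ℝ} (hab : a ≤ b)
    (hf : IntervalIntegrable f volume a b) (hφ : MonotoneOn φ (Icc a b)) :
    ∃ ξ ∈ Icc a b,
      ∫ x in a..b, f x * φ x = φ a * (∫ x in a..ξ, f x) + φ b * ∫ x in ξ..b, f x := by
  set ψ : ℝ → ℝ := fun x => φ (projIcc a b hab x) - φ a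
  have hψ : Monotone ψ := fun x y hxy =>
    sub_le_sub_right (hφ (projIcc a b hab x).2 (projIcc a b hab y).2 (monotone_projIcc hab hxy)) _
  have hψφ : ∀ x ∈ Icc a b, ψ x = φ x - φ a := fun x hx => by
    simp only [ψ, projIcc_of_mem hab hx]
  have hψa : ψ a = 0 := by rw [hψφ a (left_mem_Icc.2 hab), sub_self]
  have hfab : IntegrableOn f (Icc a b) := (intervalIntegrable_iff_integrableOn_Icc_of_le hab).1 hf
  have hfψ : IntervalIntegrable (fun x => f x * ψ x) volume a b := by
    refine (intervalIntegrable_iff_integrableOn_Ioc_of_le hab).2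
      ((hfab.mono_set Ioc_subset_Icc_self).mul_bdd (c := ψ b) hψ.measurable.aestronglyMeasurable
        (ae_restrict_of_forall_mem measurableSet_Ioc fun x hx => ?_))
    rw [Real.norm_eq_abs, abs_of_nonneg (hψa ▸ hψ hx.1.le)]
    exact hψ hx.2
  obtain ⟨ξ, hξ, hIψ⟩ := exists_setIntegral_mul_eq_of_monotone hab hψ hψa.ge hfab
  have hsplit : ∫ x in a..b, f x = (∫ x in a..ξ, f x) + ∫ x in ξ..b, f x :=
    (integral_add_adjacent_intervals
      (hfab.mono_set (uIcc_subset_Icc (left_mem_Icc.2 hab) hξ)).intervalIntegrable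
      (hfab.mono_set (uIcc_subset_Icc hξ (right_mem_Icc.2 hab))).intervalIntegrable).symm
  refine ⟨ξ, hξ, ?_⟩
  calc ∫ x in a..b, f x * φ x = ∫ x in a..b, (f x * ψ x + φ a * f x) :=
        integral_congr fun x hx => by
          rw [hψφ x (uIcc_of_le hab ▸ hx)]
          ring
    _ = ψ b * (∫ x in ξ..b, f x) + φ a * ((∫ x in a..ξ, f x) + ∫ x in ξ..b, f x) := by
        rw [integral_add hfψ (hf.const_mul _), intervalIntegral.integral_const_mul, hsplit,
          integral_of_le hab, hIψ]
    _ = φ a * (∫ x in a..ξ, f x) + φ b * ∫ x in ξ..b, f x := by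
        rw [hψφ b (right_mem_Icc.2 hab)]
        ring

theorem exists_intervalIntegral_mul_eq_of_antitoneOn {φ : ℝ → ℝ} (hab : a ≤ b)
    (hf : IntervalIntegrable f volume a b) (hφ : AntitoneOn φ (Icc a b)) :
    ∃ ξ ∈ Icc a b,
      ∫ x in a..b, f x * φ x = φ a * (∫ x in a..ξ, f x) + φ b * ∫ x in ξ..b, f x := by
  obtain ⟨ξ, hξ, h⟩ := exists_intervalIntegral_mul_eq_of_monotoneOn hab hf hφ.neg
  refine ⟨ξ, hξ, ?_⟩
  simp only [mul_neg, intervalIntegral.integral_neg] at h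
  linarith

end SecondMeanValue

theorem integral_cos_mul_left {c : ℝ} (hc : c ≠ 0) (a b : ℝ) :
    ∫ x in a..b, cos (c * x) = (sin (c * b) - sin (c * a)) / c := by
  rw [intervalIntegral.integral_comp_mul_left (fun x => cos x) hc, integral_cos, smul_eq_mul]
  field_simp

theorem sin_nat_mul_pi_div_two_of_even {n : ℕ} (hn : Even n) : sin (n * (π / 2)) = 0 := by
  obtain ⟨k, rfl⟩ := hn
  rw [show ((k + k : ℕ) : ℝ) * (π / 2) = k * π by push_cast; ring, sin_nat_mul_pi]

theorem exists_mem_Ioo_sin_nat_mul_eq_of_even {n : ℕ} (hn : Even n) {ξ : ℝ}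
    (hξ : ξ ∈ Icc (-(π / 2)) (π / 2)) :
    ∃ ξ' ∈ Ioo (-(π / 2)) (π / 2), sin (n * ξ') = sin (n * ξ) := by
  have h0 : (0 : ℝ) ∈ Ioo (-(π / 2)) (π / 2) := ⟨by linarith [pi_pos], by linarith [pi_pos]⟩
  rcases eq_endpoints_or_mem_Ioo_of_mem_Icc hξ with rfl | rfl | h
  · refine ⟨0, h0, ?_⟩
    rw [mul_zero, sin_zero, mul_neg, sin_neg, sin_nat_mul_pi_div_two_of_even hn, neg_zero]
  · exact ⟨0, h0, by rw [mul_zero, sin_zero, sin_nat_mul_pi_div_two_of_even hn]⟩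
  · exact ⟨ξ, h, rfl⟩

theorem second_mvt_cos_even_general (n : ℕ) (hn2 : 2 ≤ n) (hn : Even n) (φ : ℝ → ℝ)
    (hφ_mono : MonotoneOn φ (Set.Icc (-(π / 2)) (π / 2)) ∨
      AntitoneOn φ (Set.Icc (-(π / 2)) (π / 2))) :
    ∃ ξ ∈ Set.Ioo (-(π / 2)) (π / 2),
      ∫ θ in (-(π / 2))..(π / 2), Real.cos (n * θ) * φ θ
        = (Real.sin (n * ξ) / n) * (φ (-(π / 2)) - φ (π / 2)) := by
  have hn0 : (n : ℝ) ≠ 0 := by exact_mod_cast (by omega : n ≠ 0)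
  have hπ : -(π / 2) ≤ π / 2 := by linarith [pi_pos]
  have hcos : IntervalIntegrable (fun θ => cos (n * θ)) volume (-(π / 2)) (π / 2) :=
    (by fun_prop : Continuous fun θ : ℝ => cos (n * θ)).intervalIntegrable _ _
  obtain ⟨ξ, hξ, hI⟩ := hφ_mono.elim (exists_intervalIntegral_mul_eq_of_monotoneOn hπ hcos)
    (exists_intervalIntegral_mul_eq_of_antitoneOn hπ hcos)
  obtain ⟨ξ', hξ', hsin⟩ := exists_mem_Ioo_sin_nat_mul_eq_of_even hn hξ
  refine ⟨ξ', hξ', ?_⟩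
  rw [hI, integral_cos_mul_left hn0, integral_cos_mul_left hn0, mul_neg, sin_neg,
    sin_nat_mul_pi_div_two_of_even hn, hsin]
  ring

/-- For even `n ≥ 2` and `φ` monotone and bounded on `[−π/2, π/2]`, there is
`ξ ∈ (−π/2, π/2)` with
`∫_{−π/2}^{π/2} cos(nθ) φ(θ) dθ = (sin(nξ)/n) (φ(−π/2) − φ(π/2))`. -/
theorem second_mvt_cos_even (n : ℕ) (hn2 : 2 ≤ n) (hn : Even n) (φ : ℝ → ℝ)
    (hφ_mono : MonotoneOn φ (Set.Icc (-(π / 2)) (π / 2)) ∨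
      AntitoneOn φ (Set.Icc (-(π / 2)) (π / 2)))
    (hφ_bdd : ∃ M : ℝ, ∀ θ ∈ Set.Icc (-(π / 2)) (π / 2), |φ θ| ≤ M) :
    ∃ ξ ∈ Set.Ioo (-(π / 2)) (π / 2),
      ∫ θ in (-(π / 2))..(π / 2), Real.cos (n * θ) * φ θ
        = (Real.sin (n * ξ) / n) * (φ (-(π / 2)) - φ (π / 2)) :=
  second_mvt_cos_even_general n hn2 hn φ hφ_mono
end
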